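/- arXiv:1301.3262 — 2 statements merged into one kernel-verified Lean document; each statement's English description precedes it below -/
import Mathlib

section
/- Let p>1 and let (λ_n)_{n≥1} be a positive real sequence with Λ_n = Σ_{k=1}^n λ_k. Let L = sup_{n≥1} ( Λ_{n+1}/λ_{n+1} − Λ_n/λ_n ) and assume L < p/(p−1). Then for every positive real sequence (x_n)_{n≥1} for which all the series below converge, setting A^T_n = λ_n Σ_{k=n}^∞ x_k/Λ_k, one has Σ_{n=1}^∞ (A^T_n)^p ≤ ( p/(p−(p−1)L) ) Σ_{n=1}^∞ x_n (A^T_n)^{p−1}. -/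
/-!
Write `c n = Λ n / l n`, so that `c 1 = 1` and `c (n + 1) - 1 = Λ n / l (n + 1)`. Peeling off the
first term of the series defining `A` gives `x n = c n * A n - (c (n + 1) - 1) * A (n + 1)`.
Multiplying by `A n ^ (p - 1)`, bounding `A (n + 1) * A n ^ (p - 1)` by Young's inequality and using
`c (n + 1) - c n ≤ L` yields
`(p - (p - 1) L) / p * A n ^ p ≤ x n * A n ^ (p - 1) + e n - e (n - 1)` with
`e n = (c (n + 1) - 1) * A (n + 1) ^ p / p`. After summing, only the boundary term `e N` remains;
since `e N ≤ N * L * A (N + 1) ^ p / p` and `∑ A n ^ p` converges while `∑ 1 / N` diverges, it is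
arbitrarily small for infinitely many `N`.
-/

open Filter Finset

theorem Real.mul_mul_rpow_sub_one_le {p a b : ℝ} (hp : 1 < p) (ha : 0 ≤ a) (hb : 0 ≤ b) :
    p * (a * b ^ (p - 1)) ≤ a ^ p + (p - 1) * b ^ p := by
  have hpq : p.HolderConjugate (p / (p - 1)) :=
    (Real.holderConjugate_iff_eq_conjExponent hp).2 rfl
  have h := Real.young_inequality_of_nonneg ha (Real.rpow_nonneg hb (p - 1)) hpq
  rw [← Real.rpow_mul hb, mul_div_cancel₀ _ (by linarith : p - 1 ≠ 0), div_div_eq_mul_div] at h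
  have hp0 : 0 < p := by linarith
  calc p * (a * b ^ (p - 1)) ≤ p * (a ^ p / p + b ^ p * (p - 1) / p) := by gcongr
    _ = a ^ p + (p - 1) * b ^ p := by field_simp

-- With `a = A n`, `b = A (n + 1)`, `c = Λ n / l n` and `c' = Λ (n + 1) / l (n + 1)`, the first
-- product on the right is `x n * A n ^ (p - 1)`.
theorem rpow_le_of_slope_le {p a b c c' L : ℝ} (hp : 1 < p) (ha : 0 ≤ a) (hb : 0 ≤ b)
    (hc' : 1 ≤ c') (hcc : c' - c ≤ L) :
    (p - (p - 1) * L) / p * a ^ p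
      ≤ (c * a - (c' - 1) * b) * a ^ (p - 1) + ((c' - 1) * b ^ p / p - (c - 1) * a ^ p / p) := by
  have hp0 : 0 < p := by linarith
  have hexpand :
      (c * a - (c' - 1) * b) * a ^ (p - 1) = c * a ^ p - (c' - 1) * (b * a ^ (p - 1)) := by
    have hpow : a ^ p = a ^ (p - 1) * a := by
      rw [← Real.rpow_add_one' ha (by linarith), sub_add_cancel]
    rw [hpow]
    ring
  have hyoung := mul_le_mul_of_nonneg_left (Real.mul_mul_rpow_sub_one_le hp hb ha)
    (sub_nonneg.2 hc')
  have hslope := mul_le_mul_of_nonneg_right (mul_le_mul_of_nonneg_left hcc (sub_nonneg.2 hp.le))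
    (Real.rpow_nonneg ha p)
  rw [hexpand, ← mul_le_mul_iff_of_pos_left hp0]
  field_simp
  linear_combination hyoung + hslope

theorem Summable.frequently_natCast_mul_le {f : ℕ → ℝ} (hf : Summable f) {ε : ℝ} (hε : 0 < ε) :
    ∃ᶠ n in atTop, n * f n ≤ ε := by
  by_contra h
  rw [not_frequently] at h
  refine Real.not_summable_one_div_natCast (.of_norm_bounded_eventually_nat (hf.mul_left ε⁻¹) ?_)
  filter_upwards [h, eventually_gt_atTop 0] with n hn hn0
  have hn0 : (0 : ℝ) < n := by exact_mod_cast hn0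
  rw [Real.norm_of_nonneg (by positivity), one_div, inv_le_iff_one_le_mul₀ hn0]
  rw [not_le] at hn
  calc (1 : ℝ) ≤ n * f n / ε := by rw [le_div_iff₀ hε]; linarith
    _ = ε⁻¹ * f n * n := by field_simp

theorem tsum_le_tsum_of_le_add_sub {a y e : ℕ → ℝ} (ha : Summable a) (hy : Summable y)
    (he0 : e 0 = 0) (hstep : ∀ n, a n ≤ y n + (e (n + 1) - e n))
    (htail : ∀ ε > 0, ∃ᶠ n in atTop, e n ≤ ε) : ∑' n, a n ≤ ∑' n, y n := by
  have hpartial : ∀ N, ∑ n ∈ range N, a n - ∑ n ∈ range N, y n ≤ e N := by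
    intro N
    have := sum_le_sum fun n (_ : n ∈ range N) => hstep n
    rw [sum_add_distrib, sum_range_sub, he0] at this
    linarith
  refine sub_nonpos.1 (le_of_forall_pos_le_add fun ε hε => ?_)
  rw [zero_add]
  exact le_of_tendsto_of_frequently (ha.hasSum.tendsto_sum_nat.sub hy.hasSum.tendsto_sum_nat)
    ((htail ε hε).mono fun N hN => (hpartial N).trans hN)

section TransposeMean

variable {l x Λ A : ℕ → ℝ}

theorem partialSum_succ (hΛ : ∀ n, Λ n = ∑ k ∈ Icc 1 n, l k) (n : ℕ) :
    Λ (n + 1) = Λ n + l (n + 1) := by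
  rw [hΛ, hΛ, sum_Icc_succ_top (by omega)]

theorem partialSum_pos (hl : ∀ n, 1 ≤ n → 0 < l n) (hΛ : ∀ n, Λ n = ∑ k ∈ Icc 1 n, l k)
    {n : ℕ} (hn : 1 ≤ n) : 0 < Λ n := by
  rw [hΛ]
  exact sum_pos (fun k hk => hl k (mem_Icc.1 hk).1) ⟨1, mem_Icc.2 ⟨le_rfl, hn⟩⟩

theorem partialSum_div_one (hl : ∀ n, 1 ≤ n → 0 < l n) (hΛ : ∀ n, Λ n = ∑ k ∈ Icc 1 n, l k) :
    Λ 1 / l 1 = 1 := by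
  rw [hΛ, Icc_self, sum_singleton, div_self (hl 1 le_rfl).ne']

theorem partialSum_div_succ_sub_one (hl : ∀ n, 1 ≤ n → 0 < l n)
    (hΛ : ∀ n, Λ n = ∑ k ∈ Icc 1 n, l k) (n : ℕ) :
    Λ (n + 1) / l (n + 1) - 1 = Λ n / l (n + 1) := by
  rw [partialSum_succ hΛ, add_div, div_self (hl (n + 1) (by omega)).ne', add_sub_cancel_right]

theorem partialSum_div_succ_sub_one_le (hl : ∀ n, 1 ≤ n → 0 < l n)
    (hΛ : ∀ n, Λ n = ∑ k ∈ Icc 1 n, l k) {L : ℝ}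
    (hL : ∀ n, Λ (n + 2) / l (n + 2) - Λ (n + 1) / l (n + 1) ≤ L) (n : ℕ) :
    Λ (n + 1) / l (n + 1) - 1 ≤ n * L := by
  induction n with
  | zero => simp [partialSum_div_one hl hΛ]
  | succ n ih => push_cast; linarith [hL n]

theorem transposeMean_div_eq (hl : ∀ n, 1 ≤ n → 0 < l n)
    (hA : ∀ n, 1 ≤ n → A n = l n * ∑' k : ℕ, x (n + k) / Λ (n + k))
    (hst : ∀ n, 1 ≤ n → Summable fun k : ℕ => x (n + k) / Λ (n + k)) {n : ℕ} (hn : 1 ≤ n) :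
    A n / l n = x n / Λ n + A (n + 1) / l (n + 1) := by
  rw [hA n hn, hA (n + 1) (by omega), mul_div_cancel_left₀ _ (hl n hn).ne',
    mul_div_cancel_left₀ _ (hl (n + 1) (by omega)).ne', (hst n hn).tsum_eq_zero_add]
  simp only [add_zero, add_comm 1, add_assoc]

theorem transposeMean_pos (hl : ∀ n, 1 ≤ n → 0 < l n) (hx : ∀ n, 1 ≤ n → 0 < x n)
    (hΛ : ∀ n, Λ n = ∑ k ∈ Icc 1 n, l k)
    (hA : ∀ n, 1 ≤ n → A n = l n * ∑' k : ℕ, x (n + k) / Λ (n + k))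
    (hst : ∀ n, 1 ≤ n → Summable fun k : ℕ => x (n + k) / Λ (n + k)) {n : ℕ} (hn : 1 ≤ n) :
    0 < A n := by
  have hterm : ∀ k, 0 < x (n + k) / Λ (n + k) := fun k =>
    div_pos (hx _ (by omega)) (partialSum_pos hl hΛ (by omega))
  rw [hA n hn]
  exact mul_pos (hl n hn) ((hst n hn).tsum_pos (fun k => (hterm k).le) 0 (hterm 0))

theorem eq_partialSum_div_mul_sub (hl : ∀ n, 1 ≤ n → 0 < l n)
    (hΛ : ∀ n, Λ n = ∑ k ∈ Icc 1 n, l k)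
    (hA : ∀ n, 1 ≤ n → A n = l n * ∑' k : ℕ, x (n + k) / Λ (n + k))
    (hst : ∀ n, 1 ≤ n → Summable fun k : ℕ => x (n + k) / Λ (n + k)) {n : ℕ} (hn : 1 ≤ n) :
    x n = Λ n / l n * A n - (Λ (n + 1) / l (n + 1) - 1) * A (n + 1) :=
  calc x n = Λ n * (x n / Λ n) := (mul_div_cancel₀ _ (partialSum_pos hl hΛ hn).ne').symm
    _ = Λ n * (A n / l n - A (n + 1) / l (n + 1)) := by
      rw [transposeMean_div_eq hl hA hst hn]; ring
    _ = _ := by rw [partialSum_div_succ_sub_one hl hΛ]; ring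

theorem pos_of_partialSum_div_sub_le (hl : ∀ n, 1 ≤ n → 0 < l n)
    (hΛ : ∀ n, Λ n = ∑ k ∈ Icc 1 n, l k) {L : ℝ}
    (hL : ∀ n, Λ (n + 2) / l (n + 2) - Λ (n + 1) / l (n + 1) ≤ L) : 0 < L := by
  have := hL 0
  rw [partialSum_div_one hl hΛ, partialSum_div_succ_sub_one hl hΛ] at this
  exact (div_pos (partialSum_pos hl hΛ le_rfl) (hl 2 (by omega))).trans_le this

noncomputable def boundaryTerm (p : ℝ) (l Λ A : ℕ → ℝ) (n : ℕ) : ℝ :=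
  (Λ (n + 1) / l (n + 1) - 1) * A (n + 1) ^ p / p

theorem boundaryTerm_zero (hl : ∀ n, 1 ≤ n → 0 < l n) (hΛ : ∀ n, Λ n = ∑ k ∈ Icc 1 n, l k)
    (p : ℝ) (A : ℕ → ℝ) : boundaryTerm p l Λ A 0 = 0 := by
  simp [boundaryTerm, partialSum_div_one hl hΛ]

theorem rpow_le_add_boundaryTerm_sub {p L : ℝ} (hp : 1 < p) (hl : ∀ n, 1 ≤ n → 0 < l n)
    (hx : ∀ n, 1 ≤ n → 0 < x n) (hΛ : ∀ n, Λ n = ∑ k ∈ Icc 1 n, l k)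
    (hL : ∀ n, Λ (n + 2) / l (n + 2) - Λ (n + 1) / l (n + 1) ≤ L)
    (hA : ∀ n, 1 ≤ n → A n = l n * ∑' k : ℕ, x (n + k) / Λ (n + k))
    (hst : ∀ n, 1 ≤ n → Summable fun k : ℕ => x (n + k) / Λ (n + k)) (n : ℕ) :
    (p - (p - 1) * L) / p * A (n + 1) ^ p ≤ x (n + 1) * A (n + 1) ^ (p - 1)
      + (boundaryTerm p l Λ A (n + 1) - boundaryTerm p l Λ A n) := by
  have hA0 : ∀ m, 0 ≤ A (m + 1) := fun m => (transposeMean_pos hl hx hΛ hA hst m.succ_pos).le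
  have hratio : 1 ≤ Λ (n + 2) / l (n + 2) := by
    rw [← sub_nonneg, partialSum_div_succ_sub_one hl hΛ]
    exact (div_pos (partialSum_pos hl hΛ n.succ_pos) (hl _ (by omega))).le
  rw [eq_partialSum_div_mul_sub hl hΛ hA hst n.succ_pos]
  exact rpow_le_of_slope_le hp (hA0 n) (hA0 (n + 1)) hratio (hL n)

theorem frequently_boundaryTerm_le {p L : ℝ} (hp : 0 < p) (hl : ∀ n, 1 ≤ n → 0 < l n)
    (hx : ∀ n, 1 ≤ n → 0 < x n) (hΛ : ∀ n, Λ n = ∑ k ∈ Icc 1 n, l k)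
    (hL : ∀ n, Λ (n + 2) / l (n + 2) - Λ (n + 1) / l (n + 1) ≤ L)
    (hA : ∀ n, 1 ≤ n → A n = l n * ∑' k : ℕ, x (n + k) / Λ (n + k))
    (hst : ∀ n, 1 ≤ n → Summable fun k : ℕ => x (n + k) / Λ (n + k))
    (hs : Summable fun n : ℕ => A (n + 1) ^ p) {ε : ℝ} (hε : 0 < ε) :
    ∃ᶠ n in atTop, boundaryTerm p l Λ A n ≤ ε := by
  have hL0 := pos_of_partialSum_div_sub_le hl hΛ hL
  refine (hs.frequently_natCast_mul_le (ε := ε * p / L) (by positivity)).mono fun n hn => ?_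
  have hAp : 0 ≤ A (n + 1) ^ p :=
    Real.rpow_nonneg (transposeMean_pos hl hx hΛ hA hst n.succ_pos).le p
  rw [le_div_iff₀ hL0] at hn
  calc boundaryTerm p l Λ A n ≤ n * L * A (n + 1) ^ p / p := by
        unfold boundaryTerm
        gcongr
        exact partialSum_div_succ_sub_one_le hl hΛ hL n
    _ ≤ ε := by
        rw [div_le_iff₀ hp]
        linarith

end TransposeMean

/-- inequality (1.07) for the transpose weighted mean average. -/
theorem stmt_3 (p : ℝ) (hp : 1 < p)
    (l x : ℕ → ℝ) (hl : ∀ n, 1 ≤ n → 0 < l n) (hx : ∀ n, 1 ≤ n → 0 < x n)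
    (Λ : ℕ → ℝ) (hΛ : ∀ n, Λ n = ∑ k ∈ Finset.Icc 1 n, l k)
    (L : ℝ)
    (hL : IsLUB (Set.range fun n : ℕ => Λ (n + 2) / l (n + 2) - Λ (n + 1) / l (n + 1)) L)
    (hLp : L < p / (p - 1))
    (A : ℕ → ℝ) (hA : ∀ n, 1 ≤ n → A n = l n * ∑' k : ℕ, x (n + k) / Λ (n + k))
    (hst : ∀ n, 1 ≤ n → Summable fun k : ℕ => x (n + k) / Λ (n + k))
    (hs1 : Summable fun n : ℕ => A (n + 1) ^ p)
    (hs2 : Summable fun n : ℕ => x (n + 1) * A (n + 1) ^ (p - 1)) :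
    ∑' n : ℕ, A (n + 1) ^ p
      ≤ (p / (p - (p - 1) * L)) * ∑' n : ℕ, x (n + 1) * A (n + 1) ^ (p - 1) := by
  have hp0 : 0 < p := by linarith
  have hslope : ∀ n, Λ (n + 2) / l (n + 2) - Λ (n + 1) / l (n + 1) ≤ L :=
    fun n => hL.1 ⟨n, rfl⟩
  have hK : 0 < p - (p - 1) * L := by
    rw [lt_div_iff₀ (by linarith)] at hLp
    linarith
  have key : (p - (p - 1) * L) / p * ∑' n, A (n + 1) ^ p
      ≤ ∑' n, x (n + 1) * A (n + 1) ^ (p - 1) := by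
    rw [← tsum_mul_left]
    exact tsum_le_tsum_of_le_add_sub (hs1.mul_left _) hs2 (boundaryTerm_zero hl hΛ p A)
      (rpow_le_add_boundaryTerm_sub hp hl hx hΛ hslope hA hst)
      (fun _ hε => frequently_boundaryTerm_le hp0 hl hx hΛ hslope hA hst hs1 hε)
  rw [div_mul_eq_mul_div, div_le_iff₀ hp0] at key
  rw [div_mul_eq_mul_div, le_div_iff₀ hK]
  linarith
end

section
/- Let p>1 and let c be a real number with 0 ≤ c < 1. Let (λ_n)_{n≥1} be a positive real sequence whose sum converges, with tails Λ*_n = Σ_{k=n}^∞ λ_k, and let (x_n)_{n≥1} be a positive real sequence. Setting C_n = (1/Λ*_n) Σ_{k=1}^n λ_k x_k and assuming the series on the right-hand side converges, one has Σ_{n=1}^∞ λ_n (Λ*_n)^{p−c} C_n^p ≤ ( p/(1−c) ) Σ_{n=1}^∞ λ_n (Λ*_n)^{p−c} x_n C_n^{p−1}. -/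
/-!
With `S n = ∑_{k ≤ n} λ_k x_k` and `Λ n = Λ*_n`, the summands become
`λ_n Λ_n^{-c} S_n^p` and `λ_n x_n Λ_n^{1-c} S_n^{p-1}`. Since `λ_n = Λ_n - Λ_{n+1}` and
`λ_n x_n = S_n - S_{n-1}`, the tangent-line inequalities for the concave function `t ^ (1 - c)` and
the convex function `t ^ p` give
`(1 - c) λ_n Λ_n^{-c} S_n^p + Λ_{n+1}^{1-c} S_n^p`
`  ≤ Λ_n^{1-c} S_{n-1}^p + p λ_n x_n Λ_n^{1-c} S_n^{p-1}`,
which telescopes in `Λ_{n+1}^{1-c} S_n^p`.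
-/

open Finset Real

namespace Real

theorem rpow_add_mul_rpow_sub_one_mul_sub_le {a b p : ℝ} (ha : 0 < a) (hb : 0 ≤ b)
    (hp : 1 ≤ p) : a ^ p + p * a ^ (p - 1) * (b - a) ≤ b ^ p := by
  have h := one_add_mul_self_le_rpow_one_add (s := b / a - 1)
    (by linarith [div_nonneg hb ha.le]) hp
  rw [add_sub_cancel, div_rpow hb ha.le, le_div_iff₀ (rpow_pos_of_pos ha p)] at h
  calc a ^ p + p * a ^ (p - 1) * (b - a) = (1 + p * (b / a - 1)) * a ^ p := by
        rw [rpow_sub_one ha.ne']; field_simp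
    _ ≤ b ^ p := h

theorem rpow_le_rpow_add_mul_rpow_sub_one_mul_sub {a b p : ℝ} (ha : 0 < a) (hb : 0 ≤ b)
    (hp₀ : 0 ≤ p) (hp₁ : p ≤ 1) : b ^ p ≤ a ^ p + p * a ^ (p - 1) * (b - a) := by
  have h := rpow_one_add_le_one_add_mul_self (s := b / a - 1)
    (by linarith [div_nonneg hb ha.le]) hp₀ hp₁
  rw [add_sub_cancel, div_rpow hb ha.le, div_le_iff₀ (rpow_pos_of_pos ha p)] at h
  calc b ^ p ≤ (1 + p * (b / a - 1)) * a ^ p := h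
    _ = a ^ p + p * a ^ (p - 1) * (b - a) := by
        rw [rpow_sub_one ha.ne']; field_simp

theorem rpow_mul_div_rpow {a b : ℝ} (ha : 0 < a) (hb : 0 ≤ b) (r q : ℝ) :
    a ^ r * (b / a) ^ q = a ^ (r - q) * b ^ q := by
  rw [div_rpow hb ha.le, rpow_sub ha]; ring

end Real

theorem one_sub_mul_add_le_add_mul {p c Λ Λ' S S' : ℝ} (hp : 1 ≤ p) (hc₀ : 0 ≤ c)
    (hc₁ : c ≤ 1) (hΛ : 0 < Λ) (hΛ' : 0 ≤ Λ') (hS : 0 < S) (hS' : 0 ≤ S') :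
    (1 - c) * ((Λ - Λ') * Λ ^ (-c) * S ^ p) + Λ' ^ (1 - c) * S ^ p
      ≤ Λ ^ (1 - c) * S' ^ p + p * ((S - S') * Λ ^ (1 - c) * S ^ (p - 1)) := by
  have hconc := rpow_le_rpow_add_mul_rpow_sub_one_mul_sub (p := 1 - c) hΛ hΛ' (by linarith)
    (by linarith)
  have hconv := rpow_add_mul_rpow_sub_one_mul_sub_le hS hS' hp
  rw [sub_sub_cancel_left] at hconc
  have := mul_le_mul_of_nonneg_right hconc (rpow_nonneg hS.le p)
  have := mul_le_mul_of_nonneg_left hconv (rpow_nonneg hΛ.le (1 - c))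
  nlinarith

theorem one_sub_mul_sum_range_le_mul_sum_range {p c : ℝ} (hp : 1 ≤ p) (hc₀ : 0 ≤ c)
    (hc₁ : c ≤ 1) {Λ S : ℕ → ℝ} (hΛ : ∀ n, 0 < Λ n) (hS₀ : S 0 = 0) (hS : ∀ n, 0 < S (n + 1))
    (N : ℕ) :
    (1 - c) * ∑ n ∈ range N, (Λ n - Λ (n + 1)) * Λ n ^ (-c) * S (n + 1) ^ p
      ≤ p * ∑ n ∈ range N, (S (n + 1) - S n) * Λ n ^ (1 - c) * S (n + 1) ^ (p - 1) := by
  set T : ℕ → ℝ := fun n => Λ n ^ (1 - c) * S n ^ p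
  have hS_nonneg : ∀ n, 0 ≤ S n := fun
    | 0 => hS₀.ge
    | n + 1 => (hS n).le
  have hstep : ∀ n, (1 - c) * ((Λ n - Λ (n + 1)) * Λ n ^ (-c) * S (n + 1) ^ p)
      ≤ p * ((S (n + 1) - S n) * Λ n ^ (1 - c) * S (n + 1) ^ (p - 1)) + (T n - T (n + 1)) :=
    fun n => by
      have := one_sub_mul_add_le_add_mul hp hc₀ hc₁ (hΛ n) (hΛ (n + 1)).le (hS n)
        (hS_nonneg n)
      simp only [T]
      linarith
  have hT₀ : T 0 = 0 := by simp [T, hS₀, zero_rpow (by linarith : p ≠ 0)]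
  have hT_nonneg : 0 ≤ T N := mul_nonneg (rpow_nonneg (hΛ N).le _) (rpow_nonneg (hS_nonneg N) _)
  calc (1 - c) * ∑ n ∈ range N, (Λ n - Λ (n + 1)) * Λ n ^ (-c) * S (n + 1) ^ p
      ≤ ∑ n ∈ range N, (p * ((S (n + 1) - S n) * Λ n ^ (1 - c) * S (n + 1) ^ (p - 1))
          + (T n - T (n + 1))) := by
        rw [mul_sum]; exact sum_le_sum fun n _ => hstep n
    _ = p * ∑ n ∈ range N, (S (n + 1) - S n) * Λ n ^ (1 - c) * S (n + 1) ^ (p - 1)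
          + (T 0 - T N) := by rw [sum_add_distrib, sum_range_sub', mul_sum]
    _ ≤ _ := by linarith

theorem ENNReal.tsum_ofReal_le_ofReal_mul_tsum_ofReal {f g : ℕ → ℝ} {K : ℝ}
    (hf : ∀ n, 0 ≤ f n) (hg : ∀ n, 0 ≤ g n) (hK : 0 ≤ K)
    (h : ∀ N, ∑ n ∈ range N, f n ≤ K * ∑ n ∈ range N, g n) :
    ∑' n, ENNReal.ofReal (f n) ≤ ENNReal.ofReal K * ∑' n, ENNReal.ofReal (g n) := by
  refine ENNReal.tsum_le_of_sum_range_le fun N => ?_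
  calc ∑ n ∈ range N, ENNReal.ofReal (f n)
      = ENNReal.ofReal (∑ n ∈ range N, f n) := (ENNReal.ofReal_sum_of_nonneg fun n _ => hf n).symm
    _ ≤ ENNReal.ofReal (K * ∑ n ∈ range N, g n) := ENNReal.ofReal_le_ofReal (h N)
    _ = ENNReal.ofReal K * ∑ n ∈ range N, ENNReal.ofReal (g n) := by
        rw [ENNReal.ofReal_mul hK, ENNReal.ofReal_sum_of_nonneg fun n _ => hg n]
    _ ≤ _ := by gcongr; exact ENNReal.sum_le_tsum _

section Tails

variable {l Λs : ℕ → ℝ}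

theorem summable_nat_add_succ (hlsum : Summable fun n => l (n + 1)) (n : ℕ) :
    Summable fun k => l (n + 1 + k) :=
  ((summable_nat_add_iff n).2 hlsum).congr fun k => congrArg l (by omega)

theorem tails_pos (hl : ∀ n, 1 ≤ n → 0 < l n) (hlsum : Summable fun n => l (n + 1))
    (hΛs : ∀ n, 1 ≤ n → Λs n = ∑' k, l (n + k)) (n : ℕ) : 0 < Λs (n + 1) := by
  rw [hΛs _ (Nat.le_add_left 1 n)]
  exact (summable_nat_add_succ hlsum n).tsum_pos (fun k => (hl _ (by omega)).le) 0
    (hl _ (by omega))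

theorem tails_sub_tails_succ (hlsum : Summable fun n => l (n + 1))
    (hΛs : ∀ n, 1 ≤ n → Λs n = ∑' k, l (n + k)) (n : ℕ) :
    Λs (n + 1) - Λs (n + 1 + 1) = l (n + 1) := by
  rw [hΛs _ (Nat.le_add_left 1 n), hΛs _ (by omega),
    (summable_nat_add_succ hlsum n).tsum_eq_zero_add, add_zero, add_sub_assoc, add_eq_left,
    sub_eq_zero]
  exact tsum_congr fun k => congrArg l (by omega)

end Tails

theorem stmt_7_general (p c : ℝ) (hp : 1 < p) (hc0 : 0 ≤ c) (hc1 : c < 1)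
    (l x : ℕ → ℝ) (hl : ∀ n, 1 ≤ n → 0 < l n) (hx : ∀ n, 1 ≤ n → 0 < x n)
    (hlsum : Summable fun n : ℕ => l (n + 1))
    (Λs : ℕ → ℝ) (hΛs : ∀ n, 1 ≤ n → Λs n = ∑' k : ℕ, l (n + k))
    (C : ℕ → ℝ) (hC : ∀ n, 1 ≤ n → C n = (1 / Λs n) * ∑ k ∈ Finset.Icc 1 n, l k * x k) :
    ∑' n : ℕ, ENNReal.ofReal (l (n + 1) * Λs (n + 1) ^ (p - c) * C (n + 1) ^ p)
      ≤ ENNReal.ofReal (p / (1 - c)) *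
        ∑' n : ℕ, ENNReal.ofReal
          (l (n + 1) * Λs (n + 1) ^ (p - c) * x (n + 1) * C (n + 1) ^ (p - 1)) := by
  set S : ℕ → ℝ := fun n => ∑ k ∈ Icc 1 n, l k * x k
  have hS_succ : ∀ n, S (n + 1) - S n = l (n + 1) * x (n + 1) := fun n => by
    simp only [S, sum_Icc_succ_top (Nat.le_add_left 1 n)]; ring
  have hS_pos : ∀ n, 0 < S (n + 1) := fun n =>
    sum_pos (fun k hk => mul_pos (hl k (mem_Icc.1 hk).1) (hx k (mem_Icc.1 hk).1))
      (nonempty_Icc.2 (Nat.le_add_left 1 n))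
  have hΛ_pos := tails_pos hl hlsum hΛs
  have hΛ_succ := tails_sub_tails_succ hlsum hΛs
  have hCS : ∀ n, C (n + 1) = S (n + 1) / Λs (n + 1) := fun n => by
    rw [hC _ (Nat.le_add_left 1 n), one_div_mul_eq_div]
  have hA : ∀ n, l (n + 1) * Λs (n + 1) ^ (p - c) * C (n + 1) ^ p
      = l (n + 1) * Λs (n + 1) ^ (-c) * S (n + 1) ^ p := fun n => by
    rw [mul_assoc, hCS, rpow_mul_div_rpow (hΛ_pos n) (hS_pos n).le, sub_sub_cancel_left,
      mul_assoc]
  have hB : ∀ n, l (n + 1) * Λs (n + 1) ^ (p - c) * x (n + 1) * C (n + 1) ^ (p - 1)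
      = l (n + 1) * x (n + 1) * Λs (n + 1) ^ (1 - c) * S (n + 1) ^ (p - 1) := fun n => by
    rw [hCS, mul_right_comm _ _ (x _), mul_assoc _ (Λs _ ^ _),
      rpow_mul_div_rpow (hΛ_pos n) (hS_pos n).le, sub_sub_sub_cancel_left]
    ring
  have key := one_sub_mul_sum_range_le_mul_sum_range hp.le hc0 hc1.le hΛ_pos rfl hS_pos
  simp only [hS_succ, hΛ_succ] at key
  simp only [hA, hB]
  have hl' : ∀ n, 0 < l (n + 1) := fun n => hl _ n.succ_pos
  have hx' : ∀ n, 0 < x (n + 1) := fun n => hx _ n.succ_pos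
  refine ENNReal.tsum_ofReal_le_ofReal_mul_tsum_ofReal
    (fun n => by have := hl' n; have := hΛ_pos n; have := hS_pos n; positivity)
    (fun n => by have := hl' n; have := hx' n; have := hΛ_pos n; have := hS_pos n; positivity)
    (div_nonneg (by linarith) (by linarith)) fun N => ?_
  rw [div_mul_eq_mul_div, le_div_iff₀ (by linarith), mul_comm]
  exact key N

/-- inequality (1.10). -/
theorem stmt_7 (p c : ℝ) (hp : 1 < p) (hc0 : 0 ≤ c) (hc1 : c < 1)
    (l x : ℕ → ℝ) (hl : ∀ n, 1 ≤ n → 0 < l n) (hx : ∀ n, 1 ≤ n → 0 < x n)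
    (hlsum : Summable fun n : ℕ => l (n + 1))
    (Λs : ℕ → ℝ) (hΛs : ∀ n, 1 ≤ n → Λs n = ∑' k : ℕ, l (n + k))
    (C : ℕ → ℝ) (hC : ∀ n, 1 ≤ n → C n = (1 / Λs n) * ∑ k ∈ Finset.Icc 1 n, l k * x k)
    (hs : Summable fun n : ℕ =>
      l (n + 1) * Λs (n + 1) ^ (p - c) * x (n + 1) * C (n + 1) ^ (p - 1)) :
    ∑' n : ℕ, ENNReal.ofReal (l (n + 1) * Λs (n + 1) ^ (p - c) * C (n + 1) ^ p)
      ≤ ENNReal.ofReal (p / (1 - c)) *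
        ∑' n : ℕ, ENNReal.ofReal
          (l (n + 1) * Λs (n + 1) ^ (p - c) * x (n + 1) * C (n + 1) ^ (p - 1)) :=
  stmt_7_general p c hp hc0 hc1 l x hl hx hlsum Λs hΛs C hC
end
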